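/- arXiv:2003.10574 — 7 statements merged into one kernel-verified Lean document; each statement's English description precedes it below -/
import Mathlib

section
/- Let G be a finite simple graph with the all-zero configuration, and let H ⊆ V(G). Perform a perturbation of H (each vertex of H sends one chip to each of its neighbours), then one subsequent Diffusion firing step (each vertex sends a chip to each strictly poorer neighbour and receives a chip from each strictly richer neighbour). The resulting configuration is again the all-zero configuration if and only if H is complementary component dominant (CCD). -/
open Finset

variable {V : Type*} [Fintype V] [DecidableEq V]

/-- Number of neighbours of `v` inside the set `S`. -/
def nbrsIn (G : SimpleGraph V) [DecidableRel G.Adj] (S : Finset V) (v : V) : ℕ :=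
  (S.filter (fun u => G.Adj v u)).card

/-- `H` is complementary component dominant (CCD). -/
def CCD (G : SimpleGraph V) [DecidableRel G.Adj] (H : Finset V) : Prop :=
  (∀ x y, G.Adj x y → x ∈ H → y ∈ H → nbrsIn G Hᶜ x = nbrsIn G Hᶜ y) ∧
  (∀ u v, G.Adj u v → u ∉ H → v ∉ H → nbrsIn G H u = nbrsIn G H v)

/-- One Diffusion firing step: each vertex sends a chip to each strictly poorer
neighbour and receives a chip from each strictly richer neighbour. -/
def fire (G : SimpleGraph V) [DecidableRel G.Adj] (c : V → ℤ) (v : V) : ℤ :=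
  c v + ((Finset.univ.filter (fun u => G.Adj v u ∧ c v < c u)).card : ℤ)
      - ((Finset.univ.filter (fun u => G.Adj v u ∧ c u < c v)).card : ℤ)

/-- Configuration resulting from perturbing `H` starting at the all-zero
configuration: each vertex of `H` sends one chip to each of its neighbours. -/
def perturbZero (G : SimpleGraph V) [DecidableRel G.Adj] (H : Finset V) (v : V) : ℤ :=
  (nbrsIn G H v : ℤ) - (if v ∈ H then (G.degree v : ℤ) else 0)

/-!
After perturbing `H` from zero, a vertex of `H` holds minus its number of neighbours outside `H`
and a vertex outside `H` holds its number of neighbours in `H`, so every edge across the cut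
goes strictly uphill from the `H` side. In the firing step the chips a vertex exchanges across the
cut therefore exactly cancel its stack, and what is left is the net flow along edges inside `H`
and inside `Hᶜ`. That flow vanishes at every vertex iff the configuration is constant along those
edges, which is the CCD condition.
-/

theorem forall_card_gt_eq_card_lt_iff {α : Type*} [Fintype α] (c : α → ℤ) (R : α → α → Prop)
    [DecidableRel R] (hR : ∀ x y, R x y → R y x) :
    (∀ v, #{u | R v u ∧ c v < c u} = #{u | R v u ∧ c u < c v}) ↔
      ∀ x y, R x y → c x = c y := by
  constructor
  · intro hbal
    by_contra! hne
    obtain ⟨x, y, hxy, hcxy⟩ := hne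
    -- Take a descending `R`-step `v → u` with `c v` maximal: `v` then has nothing above it.
    have hdesc : (univ.filter fun p : α × α => R p.1 p.2 ∧ c p.2 < c p.1).Nonempty := by
      rcases hcxy.lt_or_gt with h | h
      · exact ⟨(y, x), by simpa using ⟨hR _ _ hxy, h⟩⟩
      · exact ⟨(x, y), by simpa using ⟨hxy, h⟩⟩
    obtain ⟨⟨v, u⟩, hvu, hmax⟩ := exists_max_image _ (fun p : α × α => c p.1) hdesc
    simp only [mem_filter, mem_univ, true_and] at hvu
    have hpoorer : 0 < #{u | R v u ∧ c u < c v} := card_pos.mpr ⟨u, by simpa using hvu⟩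
    obtain ⟨w, hw⟩ := card_pos.mp (hbal v ▸ hpoorer)
    simp only [mem_filter, mem_univ, true_and] at hw
    have := hmax (w, v) (by simpa using ⟨hR _ _ hw.1, hw.2⟩)
    exact absurd hw.2 (not_lt.mpr this)
  · intro hconst v
    rw [card_eq_zero.mpr, card_eq_zero.mpr] <;>
      exact filter_eq_empty_iff.mpr fun u _ ⟨hvu, hlt⟩ => by have := hconst v u hvu; omega

section Perturbation

variable (G : SimpleGraph V) [DecidableRel G.Adj] (H : Finset V)

theorem nbrsIn_add_nbrsIn_compl (v : V) : nbrsIn G H v + nbrsIn G Hᶜ v = G.degree v := by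
  rw [nbrsIn, nbrsIn, ← card_union_of_disjoint (disjoint_filter_filter disjoint_compl_right),
    ← filter_union, union_compl, ← SimpleGraph.neighborFinset_eq_filter,
    SimpleGraph.card_neighborFinset_eq_degree]

theorem perturbZero_of_mem {v : V} (hv : v ∈ H) : perturbZero G H v = -nbrsIn G Hᶜ v := by
  have := nbrsIn_add_nbrsIn_compl G H v
  simp only [perturbZero, if_pos hv]
  omega

theorem perturbZero_of_notMem {v : V} (hv : v ∉ H) : perturbZero G H v = nbrsIn G H v := by
  simp [perturbZero, hv]

variable {G H} in
theorem perturbZero_lt_of_adj {v u : V} (hv : v ∈ H) (hu : u ∉ H) (hvu : G.Adj v u) :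
    perturbZero G H v < perturbZero G H u := by
  have : 0 < nbrsIn G H u := card_pos.mpr ⟨v, mem_filter.mpr ⟨hv, hvu.symm⟩⟩
  rw [perturbZero_of_mem G H hv, perturbZero_of_notMem G H hu]
  omega

theorem card_adj_perturbZero_gt (v : V) :
    #{u | G.Adj v u ∧ perturbZero G H v < perturbZero G H u} =
      #{u | (G.Adj v u ∧ (v ∈ H ↔ u ∈ H)) ∧ perturbZero G H v < perturbZero G H u} +
        if v ∈ H then nbrsIn G Hᶜ v else 0 := by
  rw [← card_filter_add_card_filter_not (fun u => v ∈ H ↔ u ∈ H), filter_filter,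
    filter_filter]
  congr 2
  · ext u; simp only [and_right_comm]
  split_ifs with hv
  · rw [nbrsIn]
    congr 1
    ext u
    simp only [mem_filter, mem_univ, true_and, mem_compl, hv, true_iff]
    exact ⟨fun h => ⟨h.2, h.1.1⟩, fun h => ⟨⟨h.2, perturbZero_lt_of_adj hv h.1 h.2⟩, h.1⟩⟩
  · refine card_eq_zero.mpr (filter_eq_empty_iff.mpr fun u _ ⟨⟨hvu, hlt⟩, hside⟩ => ?_)
    have hu : u ∈ H := by tauto
    exact (perturbZero_lt_of_adj hu hv hvu.symm).not_gt hlt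

theorem perturbZero_compl : perturbZero G Hᶜ = -perturbZero G H := by
  funext v
  by_cases hv : v ∈ H
  · rw [Pi.neg_apply, perturbZero_of_notMem G Hᶜ (notMem_compl.mpr hv), perturbZero_of_mem G H hv,
      neg_neg]
  · rw [Pi.neg_apply, perturbZero_of_mem G Hᶜ (mem_compl.mpr hv), compl_compl,
      perturbZero_of_notMem G H hv]

theorem card_adj_perturbZero_lt (v : V) :
    #{u | G.Adj v u ∧ perturbZero G H u < perturbZero G H v} =
      #{u | (G.Adj v u ∧ (v ∈ H ↔ u ∈ H)) ∧ perturbZero G H u < perturbZero G H v} +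
        if v ∈ H then 0 else nbrsIn G H v := by
  simpa only [perturbZero_compl, Pi.neg_apply, neg_lt_neg_iff, mem_compl, not_iff_not,
    compl_compl, ite_not] using card_adj_perturbZero_gt G Hᶜ v

theorem fire_perturbZero (v : V) :
    fire G (perturbZero G H) v =
      #{u | (G.Adj v u ∧ (v ∈ H ↔ u ∈ H)) ∧ perturbZero G H v < perturbZero G H u} -
        (#{u | (G.Adj v u ∧ (v ∈ H ↔ u ∈ H)) ∧ perturbZero G H u < perturbZero G H v} : ℤ) := by
  rw [fire, card_adj_perturbZero_gt, card_adj_perturbZero_lt]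
  by_cases hv : v ∈ H
  · simp only [perturbZero_of_mem G H hv, if_pos hv]
    push_cast; ring
  · simp only [perturbZero_of_notMem G H hv, if_neg hv]
    push_cast; ring

theorem ccd_iff_forall_adj_perturbZero_eq :
    CCD G H ↔ ∀ x y, G.Adj x y ∧ (x ∈ H ↔ y ∈ H) → perturbZero G H x = perturbZero G H y := by
  constructor
  · rintro ⟨hH, hHc⟩ x y ⟨hxy, hside⟩
    by_cases hx : x ∈ H
    · have hy := hside.mp hx
      rw [perturbZero_of_mem G H hx, perturbZero_of_mem G H hy, hH x y hxy hx hy]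
    · have hy := hside.not.mp hx
      rw [perturbZero_of_notMem G H hx, perturbZero_of_notMem G H hy, hHc x y hxy hx hy]
  · intro hconst
    refine ⟨fun x y hxy hx hy => ?_, fun x y hxy hx hy => ?_⟩
    · have := hconst x y ⟨hxy, iff_of_true hx hy⟩
      rwa [perturbZero_of_mem G H hx, perturbZero_of_mem G H hy, neg_inj, Nat.cast_inj] at this
    · have := hconst x y ⟨hxy, iff_of_false hx hy⟩
      rwa [perturbZero_of_notMem G H hx, perturbZero_of_notMem G H hy, Nat.cast_inj] at this

end Perturbation

/-- Starting from the all-zero configuration, perturbing `H` and then firing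
once restores the all-zero configuration iff `H` is CCD. -/
theorem zero_after_perturb_fire_iff_CCD (G : SimpleGraph V) [DecidableRel G.Adj]
    (H : Finset V) :
    (∀ v, fire G (perturbZero G H) v = 0) ↔ CCD G H := by
  rw [ccd_iff_forall_adj_perturbZero_eq, ← forall_card_gt_eq_card_lt_iff (perturbZero G H)
    (fun x y => G.Adj x y ∧ (x ∈ H ↔ y ∈ H)) fun x y h => ⟨h.1.symm, h.2.symm⟩]
  simp only [fire_perturbZero, sub_eq_zero, Nat.cast_inj]
end

section
/- In a connected finite simple graph G, every nonempty CCD subset H of V(G) with H ≠ V(G) is a dominating set of G. -/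
open Finset

variable {V : Type*} [Fintype V] [DecidableEq V]

private lemma zero_nbrs_not_mem (G : SimpleGraph V) [DecidableRel G.Adj]
    (H : Finset V) {a u : V} (h0 : nbrsIn G H a = 0) (hadj : G.Adj a u) : u ∉ H := by
  intro hu
  have := Finset.card_eq_zero.mp h0
  have : u ∈ H.filter (fun u => G.Adj a u) := Finset.mem_filter.mpr ⟨hu, hadj⟩
  simp_all

private lemma walk_prop (G : SimpleGraph V) [DecidableRel G.Adj] (H : Finset V)
    (h : CCD G H) {a b : V} (p : G.Walk a b) (haH : a ∉ H) (h0 : nbrsIn G H a = 0) :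
    b ∉ H := by
  induction p with
  | nil => exact haH
  | cons hadj p ih =>
    have hcH := zero_nbrs_not_mem G H h0 hadj
    have hc0 := (h.2 _ _ hadj haH hcH).symm.trans h0
    exact ih hcH hc0

theorem CCD_dominating (G : SimpleGraph V) [DecidableRel G.Adj] (hG : G.Connected)
    (H : Finset V) (hne : H.Nonempty) (hproper : H ≠ Finset.univ) (h : CCD G H) :
    ∀ v : V, v ∈ H ∨ ∃ u ∈ H, G.Adj u v := by
  intro v
  by_contra hcon
  push_neg at hcon
  obtain ⟨hvH, hnb⟩ := hcon
  have h0 : nbrsIn G H v = 0 := by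
    rw [nbrsIn, Finset.card_eq_zero, Finset.filter_eq_empty_iff]
    intro u hu hadj
    exact hnb u hu hadj.symm
  obtain ⟨w, hwH⟩ := hne
  obtain ⟨p⟩ := hG v w
  exact walk_prop G H h p hvH h0 hwH
end

section
/- Every minimal dominating set of the path P_n with n ≥ 2 vertices is CCD. -/
open Finset

variable {V : Type*} [Fintype V] [DecidableEq V]

/-- The path graph on `n` vertices `0, 1, …, n-1`. -/
def pathG (n : ℕ) : SimpleGraph (Fin n) where
  Adj i j := i.val + 1 = j.val ∨ j.val + 1 = i.val
  symm := ⟨by intro i j h; tauto⟩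
  loopless := ⟨by intro i h; rcases h with h | h <;> omega⟩

instance (n : ℕ) : DecidableRel (pathG n).Adj :=
  fun i j => inferInstanceAs (Decidable (i.val + 1 = j.val ∨ j.val + 1 = i.val))

def Dominating {n : ℕ} (G : SimpleGraph (Fin n)) (D : Finset (Fin n)) : Prop :=
  ∀ v, v ∈ D ∨ ∃ u ∈ D, G.Adj u v

/-!
Every vertex of a path has at most two neighbours, so a vertex with one neighbour outside a set
`S` and another inside it has exactly one neighbour in `S`. If `x, y ∈ D` are adjacent, then
`D \ {x}` still dominates `x` (through `y`), so by minimality some vertex outside `D` has `x` as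
its only dominator; hence `x` has exactly one neighbour outside `D`. If `u, v ∉ D` are adjacent,
each is dominated by a vertex of `D`, hence has exactly one neighbour in `D`. All the counts
compared in the CCD condition are therefore `1`.
-/

namespace pathG

variable {n : ℕ}

lemma adj_iff {i j : Fin n} : (pathG n).Adj i j ↔ i.val + 1 = j.val ∨ j.val + 1 = i.val :=
  Iff.rfl

lemma eq_or_eq_of_adj {x y w u : Fin n} (hxy : (pathG n).Adj x y) (hxw : (pathG n).Adj x w)
    (hyw : y ≠ w) (hxu : (pathG n).Adj x u) : u = y ∨ u = w := by
  rw [adj_iff] at hxy hxw hxu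
  rw [Ne, Fin.ext_iff] at hyw
  simp only [Fin.ext_iff]
  omega

lemma nbrsIn_eq_one {S : Finset (Fin n)} {x y w : Fin n} (hxy : (pathG n).Adj x y) (hy : y ∉ S)
    (hxw : (pathG n).Adj x w) (hw : w ∈ S) : nbrsIn (pathG n) S x = 1 := by
  rw [nbrsIn, card_eq_one]
  refine ⟨w, eq_singleton_iff_unique_mem.2 ⟨mem_filter.2 ⟨hw, hxw⟩, fun u hu => ?_⟩⟩
  rw [mem_filter] at hu
  rcases eq_or_eq_of_adj hxy hxw (fun h => hy (h ▸ hw)) hu.2 with rfl | rfl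
  · exact absurd hu.1 hy
  · rfl

end pathG

lemma Dominating.exists_adj_notMem_of_minimal {n : ℕ} {G : SimpleGraph (Fin n)}
    {D : Finset (Fin n)} (hdom : Dominating G D) (hmin : ∀ D' ⊂ D, ¬ Dominating G D')
    {x y : Fin n} (hx : x ∈ D) (hy : y ∈ D) (hxy : G.Adj x y) : ∃ v ∉ D, G.Adj x v := by
  have hnd : ¬ Dominating G (D.erase x) := hmin _ (erase_ssubset hx)
  simp only [Dominating, not_forall, not_or, not_exists, not_and, mem_erase] at hnd
  obtain ⟨v, hv_erase, hv_undominated⟩ := hnd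
  have hxv : G.Adj x v := by
    rcases hdom v with hv | ⟨u, hu, huv⟩
    · obtain rfl : v = x := by tauto
      exact absurd hxy.symm (hv_undominated y ⟨(G.ne_of_adj hxy).symm, hy⟩)
    · obtain rfl : u = x := by_contra fun h => hv_undominated u ⟨h, hu⟩ huv
      exact huv
  refine ⟨v, fun hv => ?_, hxv⟩
  exact G.ne_of_adj hxv (by tauto)

theorem minimalDominating_CCD_path_general (n : ℕ) (D : Finset (Fin n))
    (hdom : Dominating (pathG n) D)
    (hmin : ∀ D' : Finset (Fin n), D' ⊂ D → ¬ Dominating (pathG n) D') :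
    CCD (pathG n) D := by
  refine ⟨fun x y hxy hx hy => ?_, fun u v huv hu hv => ?_⟩
  · obtain ⟨x', hx', hxx'⟩ := hdom.exists_adj_notMem_of_minimal hmin hx hy hxy
    obtain ⟨y', hy', hyy'⟩ := hdom.exists_adj_notMem_of_minimal hmin hy hx hxy.symm
    rw [pathG.nbrsIn_eq_one hxy (notMem_compl.2 hy) hxx' (mem_compl.2 hx'),
      pathG.nbrsIn_eq_one hxy.symm (notMem_compl.2 hx) hyy' (mem_compl.2 hy')]
  · obtain ⟨a, ha, hau⟩ := (hdom u).resolve_left hu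
    obtain ⟨b, hb, hbv⟩ := (hdom v).resolve_left hv
    rw [pathG.nbrsIn_eq_one huv hv hau.symm ha, pathG.nbrsIn_eq_one huv.symm hu hbv.symm hb]

/-- Every minimal dominating set of the path `P_n`, `n ≥ 2`, is CCD. -/
theorem minimalDominating_CCD_path (n : ℕ) (hn : 2 ≤ n) (D : Finset (Fin n))
    (hdom : Dominating (pathG n) D)
    (hmin : ∀ D' : Finset (Fin n), D' ⊂ D → ¬ Dominating (pathG n) D') :
    CCD (pathG n) D :=
  minimalDominating_CCD_path_general n D hdom hmin
end

section
/- Let H be a nonempty proper CCD subset of V(P_n) for the path P_n with n ≥ 2 and vertices v_1,…,v_n. Then v_n ∈ H if and only if v_{n-1} ∉ H. -/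
open Finset

variable {V : Type*} [Fintype V] [DecidableEq V]

/-
A vertex of `H` with no neighbour outside `H` forces the same for each neighbour: that neighbour
lies in `H`, and the CCD condition transfers the count `0` to it. Along a connected graph this
spreads to every vertex, so `H` is everything. On a path, the last vertex has the second-to-last
as its only neighbour, so if both lie in `H` then `H` is everything. Since the CCD property is
symmetric under complementation, the same applies to `Hᶜ`, which rules out that both lie outside.
-/

theorem SimpleGraph.Reachable.mem_of_forall_adj_mem {α : Type*} {G : SimpleGraph α} {S : Set α}
    (hS : ∀ u w, G.Adj u w → u ∈ S → w ∈ S) {u w : α} (huw : G.Reachable u w) (hu : u ∈ S) :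
    w ∈ S := by
  obtain ⟨p⟩ := huw
  induction p with
  | nil => exact hu
  | cons hadj _ ih => exact ih (hS _ _ hadj hu)

theorem nbrsIn_eq_zero_iff {α : Type*} {G : SimpleGraph α} [DecidableRel G.Adj] {S : Finset α}
    {v : α} : nbrsIn G S v = 0 ↔ ∀ u ∈ S, ¬G.Adj v u := by
  rw [nbrsIn, card_eq_zero, filter_eq_empty_iff]

section CCD

variable {G : SimpleGraph V} [DecidableRel G.Adj]

theorem CCD.compl {H : Finset V} (h : CCD G H) : CCD G Hᶜ := by
  refine ⟨fun x y hxy hx hy => ?_, fun u v huv hu hv => ?_⟩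
  · rw [compl_compl]
    exact h.2 x y hxy (mem_compl.1 hx) (mem_compl.1 hy)
  · exact h.1 u v huv (notMem_compl.1 hu) (notMem_compl.1 hv)

theorem CCD.eq_univ_of_nbrsIn_compl_eq_zero (hG : G.Preconnected) {H : Finset V} (h : CCD G H)
    {v : V} (hv : v ∈ H) (hv₀ : nbrsIn G Hᶜ v = 0) : H = univ := by
  let S : Set V := {u | u ∈ H ∧ nbrsIn G Hᶜ u = 0}
  have hS : ∀ u w, G.Adj u w → u ∈ S → w ∈ S := by
    rintro u w huw ⟨hu, hu₀⟩
    have hw : w ∈ H := by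
      by_contra hw
      exact nbrsIn_eq_zero_iff.1 hu₀ w (mem_compl.2 hw) huw
    exact ⟨hw, (h.1 u w huw hu hw).symm.trans hu₀⟩
  exact eq_univ_iff_forall.2 fun w => ((hG v w).mem_of_forall_adj_mem hS ⟨hv, hv₀⟩).1

end CCD

theorem pathG_eq_pathGraph (n : ℕ) : pathG n = SimpleGraph.pathGraph n := by
  ext u v
  rw [SimpleGraph.pathGraph_adj]
  rfl

theorem CCD.eq_univ_of_last_mem_of_secondLast_mem {n : ℕ} (hn : 2 ≤ n) {H : Finset (Fin n)}
    (h : CCD (pathG n) H) (hlast : (⟨n - 1, Nat.sub_lt (by omega) one_pos⟩ : Fin n) ∈ H)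
    (hsecond : (⟨n - 2, Nat.sub_lt (by omega) two_pos⟩ : Fin n) ∈ H) : H = univ := by
  refine h.eq_univ_of_nbrsIn_compl_eq_zero ?_ hlast (nbrsIn_eq_zero_iff.2 ?_)
  · rw [pathG_eq_pathGraph]
    exact SimpleGraph.pathGraph_preconnected n
  · intro u hu hadj
    have hu_second : u = ⟨n - 2, Nat.sub_lt (by omega) two_pos⟩ := by
      have := u.isLt
      ext
      rcases hadj with h' | h' <;> simp only at h' ⊢ <;> omega
    exact mem_compl.1 hu (hu_second ▸ hsecond)

/-- For a nonempty proper CCD subset of `P_n` (`n ≥ 2`), the last vertex is in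
`H` iff the second-to-last vertex is not. -/
theorem last_iff_not_secondLast (n : ℕ) (hn : 2 ≤ n) (H : Finset (Fin n))
    (hne : H.Nonempty) (hproper : H ≠ Finset.univ) (h : CCD (pathG n) H) :
    (⟨n - 1, by omega⟩ : Fin n) ∈ H ↔ (⟨n - 2, by omega⟩ : Fin n) ∉ H := by
  constructor
  · intro hlast hsecond
    exact hproper (h.eq_univ_of_last_mem_of_secondLast_mem hn hlast hsecond)
  · intro hsecond
    by_contra hlast
    have hcompl := h.compl.eq_univ_of_last_mem_of_secondLast_mem hn
      (mem_compl.2 hlast) (mem_compl.2 hsecond)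
    exact hne.ne_empty ((compl_eq_univ_iff H).1 hcompl)
end

section
/- Let J_n denote the number of CCD subsets of V(P_n) (including the empty set and the full vertex set). Then J_1 = 2, J_2 = 4, and J_n = J_{n-1} + J_{n-2} − 2 for all n ≥ 3. -/
open Finset

variable {V : Type*} [Fintype V] [DecidableEq V]

/-- The number of CCD subsets of `P_n` (including `∅` and the full vertex set). -/
noncomputable def J (n : ℕ) : ℕ := Nat.card {H : Finset (Fin n) // CCD (pathG n) H}


/-!
Encode a vertex set `H` of `P_n` by its 0/1 word. At a monochromatic edge `{a, a+1}` the only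
neighbours of the other colour can be `a - 1` and `a + 2`, so `H` is CCD exactly when every
monochromatic edge sees the other colour on its left iff it sees it on its right. This condition
pushes a monochromatic triple along the whole path, so for `n ≥ 2` a CCD word is either constant
or has all runs of length one or two, the outer runs of length one. Removing the first letter of
such a word, or the first two when its second run has length two, leaves a word of the same kind
of length `n - 1` or `n - 2`; hence `J n - 2` satisfies the Fibonacci recursion.
-/

def finsetEquivBoolFun : Finset V ≃ (V → Bool) where
  toFun s v := v ∈ s
  invFun f := {v | f v}
  left_inv s := by ext; simp
  right_inv f := by ext; simp

variable {n : ℕ}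

def padded (f : Fin n → Bool) (k : ℕ) : Bool :=
  if h : k < n then f ⟨k, h⟩ else false

lemma padded_of_lt (f : Fin n → Bool) {k : ℕ} (h : k < n) : padded f k = f ⟨k, h⟩ := dif_pos h

lemma padded_of_le (f : Fin n → Bool) {k : ℕ} (h : n ≤ k) : padded f k = false :=
  dif_neg (by omega)

lemma padded_tail (f : Fin (n + 1) → Bool) :
    padded (Fin.tail f) = fun k => padded f (k + 1) := by
  funext k
  by_cases h : k < n
  · rw [padded_of_lt _ h, padded_of_lt _ (by omega)]
    rfl
  · rw [padded_of_le _ (by omega), padded_of_le _ (by omega)]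

lemma padded_compl (S : Finset (Fin n)) (k : ℕ) :
    padded (· ∈ Sᶜ) k = (decide (k < n) && !padded (· ∈ S) k) := by
  by_cases h : k < n
  · simp [padded_of_lt _ h, h]
  · simp [padded_of_le _ (not_lt.1 h), h]

lemma card_filter_val_eq (S : Finset (Fin n)) (k : ℕ) :
    #{u ∈ S | u.val = k} = (padded (· ∈ S) k).toNat := by
  by_cases hk : k < n
  · rw [padded_of_lt _ hk, filter_congr (q := (· = ⟨k, hk⟩)) (by simp [Fin.ext_iff]), filter_eq']
    split_ifs with h <;> simp [h]
  · rw [padded_of_le _ (by omega), filter_false_of_mem (by omega)]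
    rfl

lemma nbrsIn_pathG (S : Finset (Fin n)) (v : Fin n) :
    nbrsIn (pathG n) S v =
      (v.val ≠ 0 && padded (· ∈ S) (v.val - 1)).toNat + (padded (· ∈ S) (v.val + 1)).toNat := by
  have hsplit : {u ∈ S | (pathG n).Adj v u} =
      {u ∈ S | v.val ≠ 0 ∧ u.val = v.val - 1} ∪ {u ∈ S | u.val = v.val + 1} := by
    rw [← filter_or]
    refine filter_congr fun u _ => ?_
    simp only [pathG]
    omega
  rw [nbrsIn, hsplit, card_union_of_disjoint (disjoint_filter.2 fun _ _ _ _ => by omega),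
    ← card_filter_val_eq]
  by_cases hv : v.val = 0
  · simp [hv]
  · simp [hv, card_filter_val_eq]

def PathCCD (n : ℕ) (g : ℕ → Bool) : Prop :=
  ∀ a, a + 1 < n → g a = g (a + 1) →
    ((a ≠ 0 ∧ g (a - 1) ≠ g a) ↔ (a + 2 < n ∧ g (a + 2) ≠ g a))

lemma ccd_pair_iff (H : Finset (Fin n)) {x y : Fin n} (hxy : x.val + 1 = y.val) :
    ((x ∈ H → y ∈ H → nbrsIn (pathG n) Hᶜ x = nbrsIn (pathG n) Hᶜ y) ∧
      (x ∉ H → y ∉ H → nbrsIn (pathG n) H x = nbrsIn (pathG n) H y)) ↔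
    (padded (· ∈ H) x = padded (· ∈ H) (x + 1) →
      ((x.val ≠ 0 ∧ padded (· ∈ H) (x - 1) ≠ padded (· ∈ H) x) ↔
        (x + 2 < n ∧ padded (· ∈ H) (x + 2) ≠ padded (· ∈ H) x))) := by
  obtain ⟨a, ha⟩ := x
  obtain ⟨_, h⟩ := y
  subst hxy
  have hx : (⟨a, ha⟩ : Fin n) ∈ H ↔ padded (· ∈ H) a := by simp [padded_of_lt _ ha]
  have hy : (⟨a + 1, h⟩ : Fin n) ∈ H ↔ padded (· ∈ H) (a + 1) := by simp [padded_of_lt _ h]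
  have hfar : ¬a + 2 < n → padded (· ∈ H) (a + 2) = false := fun h' => padded_of_le _ (by omega)
  simp only [nbrsIn_pathG, padded_compl, hx, hy, add_tsub_cancel_right,
    show a + 1 + 1 = a + 2 by omega, h, ha, show a - 1 < n by omega]
  generalize padded (· ∈ H) = g at hfar
  by_cases h2 : a + 2 < n
  · cases g a <;> cases g (a + 1) <;> cases g (a - 1) <;> cases g (a + 2) <;> by_cases a = 0 <;>
      simp_all
  · simp only [h2, decide_false]
    cases g a <;> cases g (a + 1) <;> cases g (a - 1) <;> by_cases a = 0 <;> simp_all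

lemma ccd_pathG_iff (H : Finset (Fin n)) : CCD (pathG n) H ↔ PathCCD n (padded (· ∈ H)) := by
  refine ⟨fun hH a h => (ccd_pair_iff H (x := ⟨a, by omega⟩) (y := ⟨a + 1, h⟩) rfl).1
    ⟨hH.1 _ _ (Or.inl rfl), hH.2 _ _ (Or.inl rfl)⟩, fun hP => ?_⟩
  have hpair {x y : Fin n} (hxy : x.val + 1 = y.val) := (ccd_pair_iff H hxy).2 (hP x (by omega))
  constructor
  · rintro x y (hxy | hyx) hx hy
    · exact (hpair hxy).1 hx hy
    · exact ((hpair hyx).1 hy hx).symm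
  · rintro x y (hxy | hyx) hx hy
    · exact (hpair hxy).2 hx hy
    · exact ((hpair hyx).2 hy hx).symm

def MonoTriple (n : ℕ) (g : ℕ → Bool) (a : ℕ) : Prop :=
  a + 2 < n ∧ g a = g (a + 1) ∧ g (a + 1) = g (a + 2)

/-- The maximal runs of `g` on `[0, n)` have length at most two, the first and the last run
length one. -/
def ShortRuns (n : ℕ) (g : ℕ → Bool) : Prop :=
  g 0 ≠ g 1 ∧ g (n - 2) ≠ g (n - 1) ∧ ∀ a, ¬MonoTriple n g a

variable {g : ℕ → Bool}

lemma pathCCD_of_const {b : Bool} (hg : ∀ k < n, g k = b) : PathCCD n g := by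
  intro a ha _
  constructor
  · rintro ⟨-, hne⟩
    exact absurd (by rw [hg _ (by omega), hg _ (by omega)]) hne
  · rintro ⟨h2, hne⟩
    exact absurd (by rw [hg _ h2, hg _ (by omega)]) hne

lemma pathCCD_of_shortRuns (hg : ShortRuns n g) : PathCCD n g := by
  obtain ⟨h01, hend, hno⟩ := hg
  intro a ha he
  have ha0 : a ≠ 0 := by
    rintro rfl
    exact h01 he
  have ha2 : a + 2 < n := by
    by_contra h
    exact hend (by rwa [show n - 2 = a by omega, show n - 1 = a + 1 by omega])
  have hl : g (a - 1) ≠ g a := fun h =>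
    hno (a - 1) ⟨by omega, by rwa [Nat.sub_add_cancel (by omega)], by
      rwa [Nat.sub_add_cancel (by omega), show a - 1 + 2 = a + 1 by omega]⟩
  have hr : g (a + 2) ≠ g a := fun h => hno a ⟨ha2, he, by rw [← he, h]⟩
  exact iff_of_true ⟨ha0, hl⟩ ⟨ha2, hr⟩

namespace PathCCD

lemma monoTriple_succ (hg : PathCCD n g) {a : ℕ} (ht : MonoTriple n g a) (h3 : a + 3 < n) :
    MonoTriple n g (a + 1) := by
  obtain ⟨-, h01, h12⟩ := ht
  have := (hg (a + 1) (by omega) h12).not.1 (by simp [h01])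
  refine ⟨by omega, h12, ?_⟩
  grind

lemma monoTriple_of_succ (hg : PathCCD n g) {a : ℕ} (ht : MonoTriple n g (a + 1)) :
    MonoTriple n g a := by
  obtain ⟨h3, h12, h23⟩ := ht
  have := (hg (a + 1) (by omega) h12).not.2 fun ⟨_, h⟩ => h (h12.trans h23).symm
  refine ⟨by omega, ?_, h12⟩
  grind

lemma monoTriple_of_monoTriple (hg : PathCCD n g) {a : ℕ} (ht : MonoTriple n g a) {b : ℕ}
    (hb : b + 2 < n) : MonoTriple n g b := by
  have := ht.1
  rcases le_total a b with hab | hba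
  · induction b, hab using Nat.le_induction with
    | base => exact ht
    | succ b _ ih => exact hg.monoTriple_succ (ih (by omega)) hb
  · induction hba using Nat.decreasingInduction with
    | self => exact ht
    | of_succ b _ ih => exact hg.monoTriple_of_succ (ih (by omega))

lemma const_of_monoTriple (hg : PathCCD n g) {a : ℕ} (ht : MonoTriple n g a) :
    ∀ k < n, g k = g 0 := by
  have := ht.1
  intro k hk
  induction k with
  | zero => rfl
  | succ k ih =>
    rw [← ih (by omega)]
    by_cases hk2 : k + 2 < n
    · exact (hg.monoTriple_of_monoTriple ht hk2).2.1.symm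
    · have := (hg.monoTriple_of_monoTriple ht (b := k - 1) (by omega)).2.2
      rwa [show k - 1 + 1 = k by omega, show k - 1 + 2 = k + 1 by omega, eq_comm] at this

lemma monoTriple_zero (hg : PathCCD n g) (hn : 3 ≤ n) (h01 : g 0 = g 1) : MonoTriple n g 0 := by
  have := (hg 0 (by omega) h01).not.1 fun h => h.1 rfl
  exact ⟨hn, h01, by grind⟩

lemma monoTriple_last (hg : PathCCD n g) (hn : 3 ≤ n) (h : g (n - 2) = g (n - 1)) :
    MonoTriple n g (n - 3) := by
  obtain ⟨m, rfl⟩ : ∃ m, n = m + 3 := ⟨n - 3, by omega⟩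
  simp only [show m + 3 - 2 = m + 1 by omega, show m + 3 - 1 = m + 2 by omega] at h
  have := (hg (m + 1) (by omega) h).not.2 fun h => by omega
  exact ⟨by omega, by grind, h⟩

lemma const_or_shortRuns (hg : PathCCD n g) (hn : 2 ≤ n) :
    (∃ b, ∀ k < n, g k = b) ∨ ShortRuns n g := by
  by_cases ht : ∃ a, MonoTriple n g a
  · obtain ⟨a, ha⟩ := ht
    exact Or.inl ⟨g 0, hg.const_of_monoTriple ha⟩
  rw [not_exists] at ht
  rcases hn.eq_or_lt with rfl | hn3
  · by_cases h01 : g 0 = g 1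
    · refine Or.inl ⟨g 0, fun k hk => ?_⟩
      interval_cases k <;> simp [h01]
    · exact Or.inr ⟨h01, h01, ht⟩
  · exact Or.inr ⟨fun h => ht 0 (hg.monoTriple_zero hn3 h),
      fun h => ht _ (hg.monoTriple_last hn3 h), ht⟩

end PathCCD

lemma pathCCD_iff (hn : 2 ≤ n) : PathCCD n g ↔ (∃ b, ∀ k < n, g k = b) ∨ ShortRuns n g :=
  ⟨fun hg => hg.const_or_shortRuns hn,
    fun h => h.elim (fun ⟨_, hb⟩ => pathCCD_of_const hb) pathCCD_of_shortRuns⟩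

lemma monoTriple_shift (j a : ℕ) :
    MonoTriple n (fun k => g (k + j)) a ↔ MonoTriple (n + j) g (a + j) := by
  simp only [MonoTriple, show a + 1 + j = a + j + 1 by omega, show a + 2 + j = a + j + 2 by omega]
  constructor <;> rintro ⟨h, h'⟩ <;> exact ⟨by omega, h'⟩

lemma shortRuns_and_ne_iff (m : ℕ) :
    ShortRuns (m + 3) g ∧ g 1 ≠ g 2 ↔ g 0 = !g 1 ∧ ShortRuns (m + 2) (fun k => g (k + 1)) := by
  rw [Bool.eq_not_iff]
  constructor
  · rintro ⟨⟨h01, hend, hno⟩, h12⟩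
    exact ⟨h01, h12, hend, fun a ha => hno (a + 1) ((monoTriple_shift 1 a).1 ha)⟩
  · rintro ⟨h01, h12, hend, hno⟩
    refine ⟨⟨h01, hend, ?_⟩, h12⟩
    rintro (_ | a) ha
    · exact h01 ha.2.1
    · exact hno a ((monoTriple_shift 1 a).2 ha)

lemma shortRuns_and_eq_iff (m : ℕ) :
    ShortRuns (m + 4) g ∧ g 1 = g 2 ↔
      g 0 = !g 1 ∧ g 1 = g 2 ∧ ShortRuns (m + 2) (fun k => g (k + 2)) := by
  rw [Bool.eq_not_iff]
  constructor
  · rintro ⟨⟨h01, hend, hno⟩, h12⟩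
    exact ⟨h01, h12, fun h23 => hno 1 ⟨by omega, h12, h23⟩, hend,
      fun a ha => hno (a + 2) ((monoTriple_shift 2 a).1 ha)⟩
  · rintro ⟨h01, h12, h23, hend, hno⟩
    refine ⟨⟨h01, hend, ?_⟩, h12⟩
    rintro (_ | _ | a) ha
    · exact h01 ha.2.1
    · exact h23 ha.2.2
    · exact hno a ((monoTriple_shift 2 a).2 ha)

lemma ncard_setOf_zero_eq_and_tail_mem {α : Type*} [Finite α] {k : ℕ}
    (φ : (Fin k → α) → α) (s : Set (Fin k → α)) :
    {f : Fin (k + 1) → α | f 0 = φ (Fin.tail f) ∧ Fin.tail f ∈ s}.ncard = s.ncard := by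
  rw [← Set.ncard_image_of_injective _ (f := fun h => (Fin.cons (φ h) h : Fin (k + 1) → α))
    fun h h' e => by simpa using congrArg Fin.tail e]
  congr 1
  ext f
  constructor
  · rintro ⟨h0, hs⟩
    exact ⟨Fin.tail f, hs, by simp only [← h0, Fin.cons_self_tail]⟩
  · rintro ⟨h, hs, rfl⟩
    simpa using hs

def shortRunWords (n : ℕ) : Set (Fin n → Bool) := {f | ShortRuns n (padded f)}

lemma ncard_shortRunWords_add_four (m : ℕ) :
    (shortRunWords (m + 4)).ncard =
      (shortRunWords (m + 3)).ncard + (shortRunWords (m + 2)).ncard := by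
  have hpad (f : Fin (m + 4) → Bool) (i : Fin (m + 4)) : f i = padded f i :=
    (padded_of_lt f i.2).symm
  rw [← Set.ncard_inter_add_ncard_sdiff_eq_ncard (shortRunWords (m + 4)) {f | f 1 ≠ f 2}]
  congr 1
  · calc _ = {f : Fin (m + 4) → Bool |
          f 0 = !Fin.tail f 0 ∧ Fin.tail f ∈ shortRunWords (m + 3)}.ncard := by
          congr 1
          ext f
          simp only [shortRunWords, Set.mem_inter_iff, Set.mem_ofPred_eq, padded_tail, hpad f,
            Fin.tail, Fin.succ_zero_eq_one, Fin.coe_ofNat_eq_mod, Nat.zero_mod, Nat.one_mod,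
            Nat.mod_eq_of_lt (show 2 < m + 4 by omega)]
          exact shortRuns_and_ne_iff (m + 1)
      _ = _ := ncard_setOf_zero_eq_and_tail_mem (fun h => !h 0) _
  · calc _ = {f : Fin (m + 4) → Bool | f 0 = !Fin.tail f 0 ∧
          Fin.tail f ∈ {h : Fin (m + 3) → Bool |
            h 0 = Fin.tail h 0 ∧ Fin.tail h ∈ shortRunWords (m + 2)}}.ncard := by
          congr 1
          ext f
          simp only [shortRunWords, Set.mem_sdiff, Set.mem_ofPred_eq, padded_tail, hpad f,
            Fin.tail, Fin.succ_zero_eq_one, Fin.succ_one_eq_two, Fin.coe_ofNat_eq_mod,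
            Nat.zero_mod, Nat.one_mod, Nat.mod_eq_of_lt (show 2 < m + 4 by omega), add_assoc,
            Nat.reduceAdd, ne_eq, not_not]
          exact shortRuns_and_eq_iff m
      _ = _ := ncard_setOf_zero_eq_and_tail_mem (fun h => !h 0) _
      _ = _ := ncard_setOf_zero_eq_and_tail_mem (fun h => h 0) _

lemma J_eq_ncard_shortRunWords_add_two (hn : 2 ≤ n) : J n = (shortRunWords n).ncard + 2 := by
  have : Nonempty (Fin n) := ⟨⟨0, by omega⟩⟩
  have hconst : {f : Fin n → Bool | ∃ b, ∀ k < n, padded f k = b} =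
      Set.range (Function.const (Fin n)) := by
    ext f
    constructor
    · rintro ⟨b, hb⟩
      exact ⟨b, funext fun i => by rw [Function.const_apply, ← hb i i.2, padded_of_lt]⟩
    · rintro ⟨b, rfl⟩
      exact ⟨b, fun k hk => padded_of_lt _ hk⟩
  have hdisj : Disjoint (Set.range (Function.const (Fin n))) (shortRunWords n) := by
    rw [Set.disjoint_left]
    rintro _ ⟨b, rfl⟩ ⟨h01, -⟩
    rw [padded_of_lt _ (by omega), padded_of_lt _ (by omega)] at h01
    exact h01 rfl
  calc J n = Nat.card {f : Fin n → Bool // PathCCD n (padded f)} :=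
        Nat.card_congr (finsetEquivBoolFun.subtypeEquiv fun H => ccd_pathG_iff H)
    _ = (Set.range (Function.const (Fin n)) ∪ shortRunWords n).ncard := by
        rw [← Nat.card_coe_set_eq, ← hconst]
        congr
        ext f
        exact pathCCD_iff hn
    _ = _ := by
        rw [Set.ncard_union_eq hdisj, Set.ncard_range_of_injective Function.const_injective,
          Nat.card_eq_fintype_card, Fintype.card_bool, add_comm]

instance (n : ℕ) : DecidablePred (CCD (pathG n)) := fun _ => by unfold CCD; infer_instance

theorem J_recurrence :
    J 1 = 2 ∧ J 2 = 4 ∧ ∀ n : ℕ, 3 ≤ n → J n = J (n - 1) + J (n - 2) - 2 := by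
  have hJ1 : J 1 = 2 := by rw [J, Nat.card_eq_fintype_card]; decide
  have hJ2 : J 2 = 4 := by rw [J, Nat.card_eq_fintype_card]; decide
  have hJ3 : J 3 = 4 := by rw [J, Nat.card_eq_fintype_card]; decide
  refine ⟨hJ1, hJ2, fun n hn => ?_⟩
  obtain rfl | hn4 := hn.eq_or_lt
  · rw [hJ3, hJ2, hJ1]
  obtain ⟨m, rfl⟩ : ∃ m, n = m + 4 := ⟨n - 4, by omega⟩
  rw [show m + 4 - 1 = m + 3 by omega, show m + 4 - 2 = m + 2 by omega,
    J_eq_ncard_shortRunWords_add_two (by omega), J_eq_ncard_shortRunWords_add_two (by omega),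
    J_eq_ncard_shortRunWords_add_two (by omega), ncard_shortRunWords_add_four]
  omega
end

section
/- Let J_n be the number of CCD subsets of V(P_n) and let F_i denote the Fibonacci numbers with F_0 = 0, F_1 = 1. Then J_{k+1} = 2(F_k + 1) for all k ≥ 0. -/
/-!
Record `H ⊆ V(P_{k+1})` by its cut word `c ∈ {0,1}^k`, where `c_j` says whether the edge
`{j, j+1}` joins `H` to its complement, together with the bit `0 ∈ H`; this is a bijection.
Padding `c` with a `0` at both ends, the number of cut edges at vertex `v` is `c_{v-1} + c_v`,
so `H` is CCD iff `c_{j-1} = c_{j+1}` for every uncut edge `j`. Two adjacent zeros in the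
padded word then propagate in both directions, so the admissible words are the zero word and
the words whose padding `0c0` has no two adjacent zeros. The latter start with `1`, and removing
the first letter (if the second is `1`) or the first two (if it is `0`) gives the Fibonacci
recursion.
-/

open Finset

variable {V : Type*} [Fintype V] [DecidableEq V]

section CutDegree

variable (G : SimpleGraph V) [DecidableRel G.Adj]

def cutDegree (H : Finset V) (v : V) : ℕ :=
  #{u | G.Adj v u ∧ (u ∈ H ↔ v ∉ H)}

variable {G}

lemma nbrsIn_compl_eq_cutDegree {H : Finset V} {v : V} (hv : v ∈ H) :
    nbrsIn G Hᶜ v = cutDegree G H v := by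
  unfold nbrsIn cutDegree
  congr 1
  ext u
  simp [hv, and_comm]

lemma nbrsIn_eq_cutDegree {H : Finset V} {v : V} (hv : v ∉ H) :
    nbrsIn G H v = cutDegree G H v := by
  unfold nbrsIn cutDegree
  congr 1
  ext u
  simp [hv, and_comm]

theorem ccd_iff_cutDegree (H : Finset V) :
    CCD G H ↔
      ∀ x y, G.Adj x y → (x ∈ H ↔ y ∈ H) → cutDegree G H x = cutDegree G H y := by
  constructor
  · rintro ⟨hin, hout⟩ x y hxy hsame
    by_cases hx : x ∈ H
    · have hy := hsame.mp hx
      rw [← nbrsIn_compl_eq_cutDegree hx, ← nbrsIn_compl_eq_cutDegree hy]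
      exact hin x y hxy hx hy
    · have hy := mt hsame.mpr hx
      rw [← nbrsIn_eq_cutDegree hx, ← nbrsIn_eq_cutDegree hy]
      exact hout x y hxy hx hy
  · intro h
    refine ⟨fun x y hxy hx hy => ?_, fun x y hxy hx hy => ?_⟩
    · rw [nbrsIn_compl_eq_cutDegree hx, nbrsIn_compl_eq_cutDegree hy]
      exact h x y hxy (iff_of_true hx hy)
    · rw [nbrsIn_eq_cutDegree hx, nbrsIn_eq_cutDegree hy]
      exact h x y hxy (iff_of_false hx hy)

end CutDegree

section Words

variable {k : ℕ}

/-- The word `false c₀ … c_{k-1} false false …`; for a cut word, letter `i` records the edge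
`{i - 1, i}`. -/
def pad (c : Fin k → Bool) : ℕ → Bool
  | 0 => false
  | i + 1 => if h : i < k then c ⟨i, h⟩ else false

@[simp] lemma pad_zero (c : Fin k → Bool) : pad c 0 = false := rfl

@[simp] lemma pad_succ (c : Fin k → Bool) (j : Fin k) : pad c (j + 1) = c j := by
  simp [pad]

lemma pad_of_lt {c : Fin k → Bool} {i : ℕ} (hi : k < i) : pad c i = false := by
  obtain ⟨i, rfl⟩ := Nat.exists_eq_add_of_lt (Nat.zero_lt_of_lt hi)
  simp [pad]
  omega

lemma pad_const_false (i : ℕ) : pad (fun _ : Fin k => false) i = false := by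
  cases i <;> simp [pad]

@[simp] lemma pad_cons_one (a : Bool) (d : Fin k → Bool) :
    pad (Fin.cons a d : Fin (k + 1) → Bool) 1 = a := rfl

@[simp] lemma pad_cons_add_two (a : Bool) (d : Fin k → Bool) (i : ℕ) :
    pad (Fin.cons a d : Fin (k + 1) → Bool) (i + 2) = pad d (i + 1) := by
  simp only [pad, Nat.add_lt_add_iff_right]
  split_ifs <;> rfl

lemma pad_cons_false_succ (d : Fin k → Bool) (i : ℕ) :
    pad (Fin.cons false d : Fin (k + 1) → Bool) (i + 1) = pad d i := by
  cases i <;> simp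

def IsCCDWord (c : Fin k → Bool) : Prop :=
  ∀ j : Fin k, c j = false → pad c j = pad c (j + 2)

def NoDoubleFalse (c : Fin k → Bool) : Prop :=
  ∀ j : Fin (k + 1), (pad c j || pad c (j + 1)) = true

instance : DecidablePred (IsCCDWord (k := k)) :=
  fun _ => inferInstanceAs (Decidable (∀ _, _))

instance : DecidablePred (NoDoubleFalse (k := k)) :=
  fun _ => inferInstanceAs (Decidable (∀ _, _))

lemma IsCCDWord.eq_const_false {c : Fin k → Bool} (hc : IsCCDWord c) {j : ℕ} (hj : j ≤ k)
    (h : pad c j = false ∧ pad c (j + 1) = false) : c = fun _ => false := by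
  have down : ∀ i < k, pad c (i + 1) = false ∧ pad c (i + 2) = false →
      pad c i = false ∧ pad c (i + 1) = false := by
    rintro i hi ⟨h1, h2⟩
    exact ⟨(hc ⟨i, hi⟩ ((pad_succ c ⟨i, hi⟩).symm.trans h1)).trans h2, h1⟩
  have up : ∀ i, pad c i = false ∧ pad c (i + 1) = false →
      pad c (i + 1) = false ∧ pad c (i + 2) = false := by
    rintro i ⟨h0, h1⟩
    refine ⟨h1, ?_⟩
    by_cases hi : i < k
    · exact (hc ⟨i, hi⟩ ((pad_succ c ⟨i, hi⟩).symm.trans h1)).symm.trans h0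
    · exact pad_of_lt (by omega)
  have h0 : pad c 0 = false ∧ pad c 1 = false :=
    Nat.decreasingInduction (motive := fun i _ => pad c i = false ∧ pad c (i + 1) = false)
      (fun i hi ih => down i (by omega) ih) h (Nat.zero_le j)
  have hall : ∀ i, pad c i = false ∧ pad c (i + 1) = false := fun i =>
    Nat.rec h0 (fun i ih => up i ih) i
  funext i
  simpa using (hall (i + 1)).1

theorem isCCDWord_iff (c : Fin k → Bool) :
    IsCCDWord c ↔ c = (fun _ => false) ∨ NoDoubleFalse c := by
  constructor
  · refine fun hc => or_iff_not_imp_right.2 fun h => ?_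
    simp only [NoDoubleFalse, not_forall] at h
    obtain ⟨j, hj⟩ := h
    exact hc.eq_const_false (Nat.lt_succ_iff.1 j.2) (by simpa using hj)
  · rintro (rfl | h) j hj
    · simp [pad_const_false]
    · have h1 := h j.castSucc
      have h2 := h j.succ
      simp_all

lemma card_filter_fun_fin_succ {n : ℕ} (P : (Fin (n + 1) → Bool) → Prop) [DecidablePred P] :
    #{c | P c} = #{d | P (Fin.cons true d)} + #{d | P (Fin.cons false d)} := by
  simp only [Finset.card_filter]
  rw [← (Fin.consEquiv fun _ => Bool).sum_comp, Fintype.sum_prod_type, Fintype.sum_bool]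
  rfl

lemma not_noDoubleFalse_cons_false (d : Fin k → Bool) : ¬NoDoubleFalse (Fin.cons false d) := by
  intro h
  simpa using h 0

lemma noDoubleFalse_cons_true_cons_true (e : Fin k → Bool) :
    NoDoubleFalse (Fin.cons true (Fin.cons true e)) ↔ NoDoubleFalse (Fin.cons true e) := by
  simp [NoDoubleFalse, Fin.forall_fin_succ]

lemma noDoubleFalse_cons_true_cons_false (e : Fin k → Bool) :
    NoDoubleFalse (Fin.cons true (Fin.cons false e)) ↔ NoDoubleFalse e := by
  simp [NoDoubleFalse, Fin.forall_fin_succ, pad_cons_false_succ]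

end Words

lemma card_noDoubleFalse_succ (k : ℕ) :
    #{c : Fin (k + 1) → Bool | NoDoubleFalse c} =
      #{d : Fin k → Bool | NoDoubleFalse (Fin.cons true d)} := by
  rw [card_filter_fun_fin_succ,
    Finset.filter_false_of_mem fun d _ => not_noDoubleFalse_cons_false d, Finset.card_empty,
    add_zero]

theorem card_noDoubleFalse : ∀ k, #{c : Fin k → Bool | NoDoubleFalse c} = Nat.fib k
  | 0 => by decide
  | 1 => by decide
  | k + 2 => by
    rw [card_noDoubleFalse_succ, card_filter_fun_fin_succ]
    simp only [noDoubleFalse_cons_true_cons_true, noDoubleFalse_cons_true_cons_false]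
    rw [← card_noDoubleFalse_succ, card_noDoubleFalse k, card_noDoubleFalse (k + 1),
      Nat.fib_add_two, add_comm]

theorem card_isCCDWord (k : ℕ) : #{c : Fin k → Bool | IsCCDWord c} = Nat.fib k + 1 := by
  rw [Finset.filter_congr fun c _ => isCCDWord_iff c, Finset.filter_or,
    Finset.card_union_of_disjoint, Finset.filter_eq', card_noDoubleFalse]
  · simp [add_comm]
  · rw [Finset.disjoint_filter]
    rintro c - rfl h
    simpa [pad_const_false] using h 0

lemma card_filter_eq_and {α : Type*} [Fintype α] [DecidableEq α] (w : α) (p : α → Prop)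
    [DecidablePred p] : #{u | u = w ∧ p u} = (decide (p w)).toNat := by
  by_cases h : p w <;> simp [Finset.filter_and, Finset.filter_eq', h]

section Path

variable {k : ℕ}

def cutWord (H : Finset (Fin (k + 1))) (j : Fin k) : Bool :=
  decide (j.castSucc ∈ H ↔ j.succ ∉ H)

lemma card_filter_crossing_pred (H : Finset (Fin (k + 1))) (v : Fin (k + 1)) :
    #{u : Fin (k + 1) | u.val + 1 = v.val ∧ (u ∈ H ↔ v ∉ H)} =
      (pad (cutWord H) v).toNat := by
  rcases Fin.eq_zero_or_eq_succ v with rfl | ⟨j, rfl⟩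
  · simp
  · calc _ = #{u | u = j.castSucc ∧ (u ∈ H ↔ j.succ ∉ H)} := by
          congr 1; ext u; simp [Fin.ext_iff]
      _ = _ := by rw [card_filter_eq_and]; simp [cutWord]

lemma card_filter_crossing_succ (H : Finset (Fin (k + 1))) (v : Fin (k + 1)) :
    #{u : Fin (k + 1) | v.val + 1 = u.val ∧ (u ∈ H ↔ v ∉ H)} =
      (pad (cutWord H) (v + 1)).toNat := by
  rcases Fin.eq_castSucc_or_eq_last v with ⟨j, rfl⟩ | rfl
  · calc _ = #{u | u = j.succ ∧ (u ∈ H ↔ j.castSucc ∉ H)} := by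
          congr 1; ext u; simp [Fin.ext_iff]; omega
      _ = _ := by
          rw [card_filter_eq_and]
          by_cases h : j.succ ∈ H <;> by_cases h' : j.castSucc ∈ H <;> simp [cutWord, h, h']
  · rw [pad_of_lt (by simp)]
    simp only [Fin.val_last, Bool.toNat_false, Finset.card_eq_zero, Finset.filter_eq_empty_iff]
    intro u _ hu
    omega

lemma cutDegree_pathG (H : Finset (Fin (k + 1))) (v : Fin (k + 1)) :
    cutDegree (pathG (k + 1)) H v =
      (pad (cutWord H) v).toNat + (pad (cutWord H) (v + 1)).toNat := by
  rw [← card_filter_crossing_pred, ← card_filter_crossing_succ,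
    ← Finset.card_union_of_disjoint]
  · unfold cutDegree
    congr 1
    ext u
    simp only [Finset.mem_filter, Finset.mem_univ, true_and, Finset.mem_union]
    unfold pathG
    tauto
  · rw [Finset.disjoint_filter]
    omega

lemma forall_pathG_adj {R : Fin (k + 1) → Fin (k + 1) → Prop} :
    (∀ x y, (pathG (k + 1)).Adj x y → R x y) ↔
      ∀ j : Fin k, R j.castSucc j.succ ∧ R j.succ j.castSucc := by
  refine ⟨fun h j => ⟨h _ _ (Or.inl (by simp)), h _ _ (Or.inr (by simp))⟩, ?_⟩
  rintro h x y (hxy | hxy)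
  · obtain ⟨hR, -⟩ := h ⟨x, by omega⟩
    convert hR <;> ext <;> simp; omega
  · obtain ⟨-, hR⟩ := h ⟨y, by omega⟩
    convert hR <;> ext <;> simp; omega

theorem ccd_pathG_iff_s9 (H : Finset (Fin (k + 1))) :
    CCD (pathG (k + 1)) H ↔ IsCCDWord (cutWord H) := by
  rw [ccd_iff_cutDegree, forall_pathG_adj]
  refine forall_congr' fun j => ?_
  have hsame : (j.castSucc ∈ H ↔ j.succ ∈ H) ↔ cutWord H j = false := by
    by_cases h : j.succ ∈ H <;> by_cases h' : j.castSucc ∈ H <;> simp [cutWord, h, h']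
  simp only [cutDegree_pathG, Fin.val_castSucc, Fin.val_succ, pad_succ,
    iff_comm (a := j.succ ∈ H), hsame, Nat.add_assoc, Nat.reduceAdd]
  cases cutWord H j <;> cases pad (cutWord H) j <;> cases pad (cutWord H) (j + 2) <;> simp

lemma injective_cutWord_prod_mem_zero :
    Function.Injective fun H : Finset (Fin (k + 1)) => (cutWord H, decide (0 ∈ H)) := by
  intro H H' h
  simp only [Prod.ext_iff, funext_iff, cutWord, decide_eq_decide] at h
  obtain ⟨hcut, h0⟩ := h
  ext i
  induction i using Fin.induction with
  | zero => exact h0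
  | succ j ih => have := hcut j; tauto

noncomputable def finsetEquivCutWord : Finset (Fin (k + 1)) ≃ (Fin k → Bool) × Bool :=
  Equiv.ofBijective _ ((Fintype.bijective_iff_injective_and_card _).2
    ⟨injective_cutWord_prod_mem_zero, by simp [Fintype.card_finset, pow_succ]⟩)

end Path

theorem J_fib (k : ℕ) : J (k + 1) = 2 * (Nat.fib k + 1) := by
  calc J (k + 1) = Nat.card {p : (Fin k → Bool) × Bool // IsCCDWord p.1} :=
        Nat.card_congr (finsetEquivCutWord.subtypeEquiv fun H => ccd_pathG_iff_s9 H)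
    _ = Nat.card {c : Fin k → Bool // IsCCDWord c} * 2 := by
        rw [Nat.card_congr Equiv.prodSubtypeFstEquivSubtypeProd, Nat.card_prod,
          Nat.card_eq_fintype_card (α := Bool), Fintype.card_bool]
    _ = 2 * (Nat.fib k + 1) := by
        rw [Nat.card_eq_fintype_card, Fintype.card_subtype, card_isCCDWord, mul_comm]
end

section
/- Given a finite simple graph G and a graph orientation R of G (an assignment of a direction or 'flat' to each edge), there is at most one configuration C on G that both induces R and becomes the all-zero configuration after one Diffusion firing step. -/
open Finset

variable {V : Type*} [Fintype V] [DecidableEq V]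

/-- There is at most one configuration inducing a given orientation which
fires to the all-zero configuration: two configurations inducing the same
orientation which both fire to zero are equal. -/
theorem unique_zero_preposition (G : SimpleGraph V) [DecidableRel G.Adj]
    (c d : V → ℤ)
    (hsame : ∀ u v : V, G.Adj u v → ((c u < c v ↔ d u < d v) ∧ (c v < c u ↔ d v < d u)))
    (hc : ∀ v, fire G c v = 0) (hd : ∀ v, fire G d v = 0) :
    c = d := by
  funext v
  have e1 : Finset.univ.filter (fun u => G.Adj v u ∧ c v < c u)
      = Finset.univ.filter (fun u => G.Adj v u ∧ d v < d u) := by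
    apply Finset.filter_congr
    intro u _
    constructor <;> rintro ⟨h, h2⟩ <;> exact ⟨h, by have := hsame v u h; tauto⟩
  have e2 : Finset.univ.filter (fun u => G.Adj v u ∧ c u < c v)
      = Finset.univ.filter (fun u => G.Adj v u ∧ d u < d v) := by
    apply Finset.filter_congr
    intro u _
    constructor <;> rintro ⟨h, h2⟩ <;> exact ⟨h, by have := hsame v u h; tauto⟩
  have h1 := hc v
  have h2 := hd v
  simp only [fire, e1, e2] at h1 h2
  linarith
end
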